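/- arXiv:1905.07498 — 2 statements merged into one kernel-verified Lean document; each statement's English description precedes it below -/
import Mathlib

section
/- (Theorem 2, Lipschitz case.) Let K : ℝ → ℝ be a smoothing kernel with bound M, let ν > 0, and set h_ν(x) = (1/ν)·K(x/ν). Assume h_ν is Lipschitz continuous on ℝ. Then the function F : (0,∞) → ℝ defined by F(σ) = sup_{x ∈ ℝ} V_ν(x,σ) attains a global maximum on (0,∞); i.e., there exists σ* ∈ (0,∞) such that F(σ) ≤ F(σ*) for all σ ∈ (0,∞). -/
/-!
Write `Θ = σ Z` with `Z` standard normal, so that `V_ν(x, σ) = Var[h_ν(x - σ Z)]` for every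
real `σ`. Since `h_ν` is bounded by `B = M/ν` and `L`-Lipschitz, changing `σ` to `τ` moves
`h_ν(x - σ Z)` by at most `L |σ - τ| |Z|`, hence the variance by at most `4 B L |σ - τ| E|Z|`,
uniformly in `x`. So `F(σ) = sup_x V_ν(x, σ)` is Lipschitz on `ℝ`, with `F(0) = 0`. For large `σ`
the Gaussian density is at most `1/√(2πσ²)`, so `F(σ) ≤ ‖h_ν‖₂² / √(2πσ²) → 0`. Then
`t ↦ F(eᵗ)` is continuous, nonnegative and tends to `0` at `±∞`, so it attains its maximum.
-/

open MeasureTheory ProbabilityTheory Real Filter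

/-- The short-exposure PSF `h_ν(x) = (1/ν) K(x/ν)`. -/
noncomputable def shortPSF (K : ℝ → ℝ) (ν : ℝ) (x : ℝ) : ℝ := (1 / ν) * K (x / ν)

/-- `V_ν(x,σ) = Var[h_ν(x-Θ)] = E[h_ν(x-Θ)²] − (E[h_ν(x-Θ)])²` where `Θ ~ N(0,σ²)`. -/
noncomputable def Vnu (K : ℝ → ℝ) (ν σ x : ℝ) : ℝ :=
  (∫ θ, (shortPSF K ν (x - θ)) ^ 2 ∂(gaussianReal 0 (σ ^ 2).toNNReal))
    - (∫ θ, shortPSF K ν (x - θ) ∂(gaussianReal 0 (σ ^ 2).toNNReal)) ^ 2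

open Topology
open scoped NNReal

section BoundedVariance

variable {Ω : Type*} [MeasurableSpace Ω] {μ : Measure Ω} [IsProbabilityMeasure μ]
  {X Y : Ω → ℝ} {B : ℝ}

lemma abs_integral_le_of_abs_le (hXB : ∀ᵐ ω ∂μ, |X ω| ≤ B) : |μ[X]| ≤ B := by
  simpa using norm_integral_le_of_norm_le_const (μ := μ) (f := X) (by simpa using hXB)

lemma abs_variance_sub_variance_le (hX : AEStronglyMeasurable X μ)
    (hY : AEStronglyMeasurable Y μ) (hXB : ∀ᵐ ω ∂μ, |X ω| ≤ B) (hYB : ∀ᵐ ω ∂μ, |Y ω| ≤ B) :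
    |Var[X; μ] - Var[Y; μ]| ≤ 4 * B * ∫ ω, |X ω - Y ω| ∂μ := by
  have hX2 : MemLp X 2 μ := .of_bound hX B (by simpa using hXB)
  have hY2 : MemLp Y 2 μ := .of_bound hY B (by simpa using hYB)
  have hXY : Integrable (fun ω => |X ω - Y ω|) μ :=
    ((hX2.integrable one_le_two).sub (hY2.integrable one_le_two)).abs
  have hsq : |μ[X ^ 2] - μ[Y ^ 2]| ≤ 2 * B * ∫ ω, |X ω - Y ω| ∂μ := by
    simp only [Pi.pow_apply]
    rw [← integral_sub hX2.integrable_sq hY2.integrable_sq, ← integral_const_mul]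
    refine abs_integral_le_integral_abs.trans (integral_mono_ae ?_ (hXY.const_mul _) ?_)
    · exact (hX2.integrable_sq.sub hY2.integrable_sq).abs
    filter_upwards [hXB, hYB] with ω hXω hYω
    rw [sq_sub_sq, abs_mul]
    exact mul_le_mul_of_nonneg_right ((abs_add_le _ _).trans (by linarith)) (abs_nonneg _)
  have hmean : |μ[X] ^ 2 - μ[Y] ^ 2| ≤ 2 * B * ∫ ω, |X ω - Y ω| ∂μ := by
    have hXm := abs_integral_le_of_abs_le hXB
    have hYm := abs_integral_le_of_abs_le hYB
    have hdiff : |μ[X] - μ[Y]| ≤ ∫ ω, |X ω - Y ω| ∂μ := by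
      rw [← integral_sub (hX2.integrable one_le_two) (hY2.integrable one_le_two)]
      exact abs_integral_le_integral_abs
    rw [sq_sub_sq, abs_mul]
    exact mul_le_mul ((abs_add_le _ _).trans (by linarith)) hdiff (abs_nonneg _)
      (by linarith [abs_nonneg μ[X]])
  rw [variance_eq_sub hX2, variance_eq_sub hY2]
  calc _ = |(μ[X ^ 2] - μ[Y ^ 2]) - (μ[X] ^ 2 - μ[Y] ^ 2)| := by ring_nf
    _ ≤ _ := (abs_sub _ _).trans (by linarith)

end BoundedVariance

lemma LipschitzWith.ciSup {α ι : Type*} [PseudoMetricSpace α] [Nonempty ι] {f : ι → α → ℝ}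
    {C : ℝ≥0} (hf : ∀ i, LipschitzWith C (f i)) (hb : ∀ a, BddAbove (Set.range fun i => f i a)) :
    LipschitzWith C fun a => ⨆ i, f i a :=
  .of_le_add_mul C fun a b =>
    ciSup_le fun i => ((hf i).le_add_mul a b).trans (by gcongr; exact le_ciSup (hb b) i)

lemma Continuous.exists_forall_ge_of_tendsto_cocompact_zero {β : Type*} [TopologicalSpace β]
    [Nonempty β] {g : β → ℝ} (hg : Continuous g) (hg0 : 0 ≤ g)
    (hlim : Tendsto g (cocompact β) (𝓝 0)) : ∃ x, ∀ y, g y ≤ g x := by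
  by_cases hpos : ∃ x₀, 0 < g x₀
  · obtain ⟨x₀, hx₀⟩ := hpos
    exact hg.exists_forall_ge' x₀ ((hlim.eventually (gt_mem_nhds hx₀)).mono fun _ => le_of_lt)
  · push Not at hpos
    obtain ⟨x⟩ := ‹Nonempty β›
    exact ⟨x, fun y => (hpos y).trans (hg0 x)⟩

lemma gaussianReal_sq_toNNReal_eq_map (σ : ℝ) :
    gaussianReal 0 (σ ^ 2).toNNReal = (gaussianReal 0 1).map (σ * ·) := by
  rw [gaussianReal_map_const_mul, mul_zero, mul_one]
  congr 1
  ext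
  simp [sq_nonneg]

lemma gaussianPDFReal_le_inv_sqrt (m : ℝ) (v : ℝ≥0) (x : ℝ) :
    gaussianPDFReal m v x ≤ (√(2 * π * v))⁻¹ := by
  rw [gaussianPDFReal_def]
  refine mul_le_of_le_one_right (by positivity) (exp_le_one_iff.2 ?_)
  exact div_nonpos_of_nonpos_of_nonneg (neg_nonpos.2 (sq_nonneg _)) (by positivity)

lemma integral_gaussianReal_le_div_sqrt {g : ℝ → ℝ} (hg0 : 0 ≤ g) (hg : Integrable g) (m : ℝ)
    {v : ℝ≥0} (hv : v ≠ 0) : ∫ x, g x ∂gaussianReal m v ≤ (∫ x, g x) / √(2 * π * v) := by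
  rw [integral_gaussianReal_eq_integral_smul hv, div_eq_inv_mul, ← integral_const_mul]
  refine integral_mono_of_nonneg (ae_of_all _ fun x => ?_) (hg.const_mul _)
    (ae_of_all _ fun x => ?_)
  · exact smul_nonneg (gaussianPDFReal_nonneg m v x) (hg0 x)
  · exact mul_le_mul_of_nonneg_right (gaussianPDFReal_le_inv_sqrt m v x) (hg0 x)

section Vnu

variable {K : ℝ → ℝ} {M ν B : ℝ}

lemma abs_shortPSF_le (hν : 0 < ν) (hK0 : ∀ x, 0 ≤ K x) (hKM : ∀ x, K x ≤ M) (y : ℝ) :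
    |shortPSF K ν y| ≤ M / ν := by
  have := hK0 (y / ν)
  rw [shortPSF, abs_of_nonneg (by positivity), one_div_mul_eq_div]
  exact div_le_div_of_nonneg_right (hKM _) hν.le

lemma integrable_shortPSF_sq (hν : ν ≠ 0) (hKint : Integrable K)
    (hB : ∀ y, |shortPSF K ν y| ≤ B) : Integrable fun y => shortPSF K ν y ^ 2 := by
  have h : Integrable (shortPSF K ν) := (hKint.comp_div hν).const_mul (1 / ν)
  simpa [sq] using h.mul_bdd h.aestronglyMeasurable (ae_of_all _ hB)

lemma Vnu_eq_variance (hc : Continuous (shortPSF K ν)) (hB : ∀ y, |shortPSF K ν y| ≤ B)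
    (σ x : ℝ) : Vnu K ν σ x = Var[fun z => shortPSF K ν (x - σ * z); gaussianReal 0 1] := by
  have hX : Continuous fun z => shortPSF K ν (x - σ * z) := by fun_prop
  have hshift : Continuous fun θ => shortPSF K ν (x - θ) := by fun_prop
  have hshift_sq : Continuous fun θ => shortPSF K ν (x - θ) ^ 2 := by fun_prop
  have hφ := (measurable_const_mul σ).aemeasurable (μ := gaussianReal 0 1)
  rw [variance_eq_sub (.of_bound hX.aestronglyMeasurable B (ae_of_all _ fun z => hB _)), Vnu,
    gaussianReal_sq_toNNReal_eq_map, integral_map hφ hshift_sq.aestronglyMeasurable,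
    integral_map hφ hshift.aestronglyMeasurable]
  rfl

lemma Vnu_zero_left (x : ℝ) : Vnu K ν 0 x = 0 := by
  simp [Vnu, gaussianReal_zero_var]

lemma Vnu_nonneg (hc : Continuous (shortPSF K ν)) (hB : ∀ y, |shortPSF K ν y| ≤ B)
    (σ x : ℝ) : 0 ≤ Vnu K ν σ x := by
  rw [Vnu_eq_variance hc hB]
  exact variance_nonneg _ _

lemma Vnu_le_sq (hc : Continuous (shortPSF K ν)) (hB : ∀ y, |shortPSF K ν y| ≤ B)
    (σ x : ℝ) : Vnu K ν σ x ≤ B ^ 2 := by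
  rw [Vnu_eq_variance hc hB]
  exact (variance_le_sq_of_bounded (ae_of_all _ fun z => abs_le.1 (hB (x - σ * z)))
    (hc.comp (by fun_prop)).aemeasurable).trans_eq (by ring)

lemma Vnu_le_div_sqrt (hint : Integrable fun y => shortPSF K ν y ^ 2) {σ : ℝ} (hσ : σ ≠ 0)
    (x : ℝ) : Vnu K ν σ x ≤ (∫ y, shortPSF K ν y ^ 2) / √(2 * π * σ ^ 2) := by
  have hv : (σ ^ 2).toNNReal ≠ 0 := by simpa using hσ
  calc Vnu K ν σ x ≤ ∫ θ, shortPSF K ν (x - θ) ^ 2 ∂gaussianReal 0 (σ ^ 2).toNNReal :=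
        sub_le_self _ (sq_nonneg _)
    _ ≤ (∫ θ, shortPSF K ν (x - θ) ^ 2) / √(2 * π * (σ ^ 2).toNNReal) :=
        integral_gaussianReal_le_div_sqrt (fun _ => sq_nonneg _) (hint.comp_sub_left x) 0 hv
    _ = _ := by
        rw [integral_sub_left_eq_self (fun y => shortPSF K ν y ^ 2),
          Real.coe_toNNReal _ (sq_nonneg σ)]

lemma abs_Vnu_sub_Vnu_le {L : ℝ≥0} (hLip : LipschitzWith L (shortPSF K ν))
    (hB : ∀ y, |shortPSF K ν y| ≤ B) (σ τ x : ℝ) :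
    |Vnu K ν σ x - Vnu K ν τ x| ≤ 4 * B * L * (∫ z, |z| ∂gaussianReal 0 1) * |σ - τ| := by
  have hB0 : 0 ≤ B := (abs_nonneg _).trans (hB 0)
  have hX : ∀ σ, AEStronglyMeasurable (fun z => shortPSF K ν (x - σ * z)) (gaussianReal 0 1) :=
    fun σ => (hLip.continuous.comp (by fun_prop)).aestronglyMeasurable
  have habs : Integrable (fun z : ℝ => |z|) (gaussianReal 0 1) :=
    ((memLp_id_gaussianReal 1).integrable le_rfl).abs
  have hmove : ∫ z, |shortPSF K ν (x - σ * z) - shortPSF K ν (x - τ * z)| ∂gaussianReal 0 1 ≤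
      L * ((∫ z, |z| ∂gaussianReal 0 1) * |σ - τ|) := by
    rw [← integral_mul_const, ← integral_const_mul]
    refine integral_mono_of_nonneg (.of_forall fun z => abs_nonneg _)
      ((habs.mul_const _).const_mul _) (.of_forall fun z => ?_)
    calc |shortPSF K ν (x - σ * z) - shortPSF K ν (x - τ * z)|
        ≤ L * |(x - σ * z) - (x - τ * z)| := by
          simpa only [Real.dist_eq] using hLip.dist_le_mul (x - σ * z) (x - τ * z)
      _ = L * (|z| * |σ - τ|) := by rw [← abs_mul, ← abs_neg]; ring_nf
  rw [Vnu_eq_variance hLip.continuous hB, Vnu_eq_variance hLip.continuous hB]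
  refine (abs_variance_sub_variance_le (hX σ) (hX τ) (.of_forall fun z => hB _)
    (.of_forall fun z => hB _)).trans ?_
  calc _ ≤ 4 * B * (L * ((∫ z, |z| ∂gaussianReal 0 1) * |σ - τ|)) := by gcongr
    _ = _ := by ring

lemma lipschitzWith_iSup_Vnu {L : ℝ≥0} (hLip : LipschitzWith L (shortPSF K ν))
    (hB : ∀ y, |shortPSF K ν y| ≤ B) : ∃ C, LipschitzWith C fun σ => ⨆ x, Vnu K ν σ x := by
  refine ⟨(4 * B * L * ∫ z, |z| ∂gaussianReal 0 1).toNNReal,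
    LipschitzWith.ciSup (fun x => .of_dist_le_mul fun σ τ => ?_)
      (fun σ => ⟨B ^ 2, Set.forall_mem_range.2 (Vnu_le_sq hLip.continuous hB σ)⟩)⟩
  rw [Real.dist_eq, Real.dist_eq]
  exact (abs_Vnu_sub_Vnu_le hLip hB σ τ x).trans (by gcongr; exact le_coe_toNNReal _)

lemma tendsto_iSup_Vnu_atTop (hc : Continuous (shortPSF K ν)) (hB : ∀ y, |shortPSF K ν y| ≤ B)
    (hint : Integrable fun y => shortPSF K ν y ^ 2) :
    Tendsto (fun σ => ⨆ x, Vnu K ν σ x) atTop (𝓝 0) := by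
  have hsqrt : Tendsto (fun σ : ℝ => √(2 * π * σ ^ 2)) atTop atTop :=
    tendsto_sqrt_atTop.comp ((tendsto_pow_atTop two_ne_zero).const_mul_atTop (by positivity))
  refine squeeze_zero' (.of_forall fun σ => Real.iSup_nonneg (Vnu_nonneg hc hB σ))
    ((eventually_ne_atTop 0).mono fun σ hσ => ciSup_le (Vnu_le_div_sqrt hint hσ))
    (tendsto_const_nhds.div_atTop hsqrt)

end Vnu

theorem supVar_attains_max_of_lipschitz_general
    (K : ℝ → ℝ) (M ν : ℝ) (hν : 0 < ν)
    (hK0 : ∀ x, 0 ≤ K x) (hKM : ∀ x, K x ≤ M)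
    (hKint : Integrable K)
    (L : NNReal) (hLip : LipschitzWith L (shortPSF K ν)) :
    ∃ σstar ∈ Set.Ioi (0 : ℝ),
      ∀ σ ∈ Set.Ioi (0 : ℝ), (⨆ x : ℝ, Vnu K ν σ x) ≤ ⨆ x : ℝ, Vnu K ν σstar x := by
  have hB := abs_shortPSF_le hν hK0 hKM
  obtain ⟨C, hF⟩ := lipschitzWith_iSup_Vnu hLip hB
  have hlim : Tendsto ((fun σ => ⨆ x, Vnu K ν σ x) ∘ exp) (cocompact ℝ) (𝓝 0) := by
    rw [cocompact_eq_atBot_atTop, tendsto_sup]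
    refine ⟨?_, (tendsto_iSup_Vnu_atTop hLip.continuous hB
      (integrable_shortPSF_sq hν.ne' hKint hB)).comp tendsto_exp_atTop⟩
    simpa [Vnu_zero_left] using (hF.continuous.tendsto 0).comp tendsto_exp_atBot
  obtain ⟨t, ht⟩ := (hF.continuous.comp continuous_exp).exists_forall_ge_of_tendsto_cocompact_zero
    (fun t => Real.iSup_nonneg (Vnu_nonneg hLip.continuous hB _)) hlim
  exact ⟨exp t, exp_pos t, fun σ hσ => by simpa [exp_log hσ] using ht (log σ)⟩

theorem supVar_attains_max_of_lipschitz
    (K : ℝ → ℝ) (M ν : ℝ) (hν : 0 < ν)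
    (hK0 : ∀ x, 0 ≤ K x) (hKM : ∀ x, K x ≤ M)
    (hKeven : ∀ x, K (-x) = K x) (hKint : Integrable K)
    (L : NNReal) (hLip : LipschitzWith L (shortPSF K ν)) :
    ∃ σstar ∈ Set.Ioi (0 : ℝ),
      ∀ σ ∈ Set.Ioi (0 : ℝ), (⨆ x : ℝ, Vnu K ν σ x) ≤ ⨆ x : ℝ, Vnu K ν σstar x :=
  supVar_attains_max_of_lipschitz_general K M ν hν hK0 hKM hKint L hLip
end

section
/- Let K be the boxcar kernel and ν > 0, so that h_ν(x) = 1/(2ν) for |x| ≤ ν and 0 otherwise, and let g_ν(σ) = 2Φ(ν/σ) − 1. Then σ ↦ V_ν(0,σ) is differentiable on (0,∞) with derivative (∂V_ν/∂σ)(0,σ) = (1/(4ν²))·g_ν'(σ)·[1 − 2·g_ν(σ)], where g_ν'(σ) = −(2ν/σ²)·φ(ν/σ). -/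
open MeasureTheory ProbabilityTheory Real Filter

/-- The boxcar kernel: `K(x) = 1/2` for `|x| ≤ 1`, 0 otherwise. -/
noncomputable def boxcar (x : ℝ) : ℝ := if |x| ≤ 1 then 1 / 2 else 0

/-- `Φ`, the standard normal CDF. -/
noncomputable def stdNormalCDF (x : ℝ) : ℝ := ProbabilityTheory.cdf (gaussianReal 0 1) x

/-- `φ`, the standard normal PDF. -/
noncomputable def stdNormalPDF (u : ℝ) : ℝ :=
  (1 / Real.sqrt (2 * Real.pi)) * Real.exp (-u ^ 2 / 2)

/-!
Since `h_ν(-θ)` is `1/(2ν)` times the indicator of `[-ν, ν]`, the variance `V_ν(0,σ)` is that of a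
scaled Bernoulli variable: `V_ν(0,σ) = (1/(2ν))² (p - p²)` with
`p = P(|Θ| ≤ ν) = Φ(ν/σ) - Φ(-ν/σ) = g_ν(σ)`.
The derivative then follows from the chain rule and `Φ' = φ`.
-/

open Set

section Measure

variable {α : Type*} [MeasurableSpace α]

theorem integral_indicator_const_sq_sub_sq (μ : Measure α) {s : Set α} (hs : MeasurableSet s)
    (c : ℝ) :
    ∫ x, (s.indicator (fun _ => c) x) ^ 2 ∂μ - (∫ x, s.indicator (fun _ => c) x ∂μ) ^ 2
      = c ^ 2 * (μ.real s - μ.real s ^ 2) := by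
  have hsq : (fun x => (s.indicator (fun _ => c) x) ^ 2) = s.indicator (fun _ => c ^ 2) := by
    ext x
    by_cases hx : x ∈ s <;> simp [hx]
  rw [hsq, integral_indicator_const _ hs, integral_indicator_const _ hs, smul_eq_mul, smul_eq_mul]
  ring

theorem measureReal_Ioc_eq_cdf_sub_cdf (μ : Measure ℝ) [IsProbabilityMeasure μ] {a b : ℝ}
    (hab : a ≤ b) : μ.real (Ioc a b) = cdf μ b - cdf μ a := by
  conv_lhs => rw [measureReal_def, ← measure_cdf μ]
  rw [StieltjesFunction.measure_Ioc, ENNReal.toReal_ofReal (sub_nonneg.2 (monotone_cdf μ hab))]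

theorem hasDerivAt_integral_Iic {f : ℝ → ℝ} (hf : Integrable f) (hcont : Continuous f) (x : ℝ) :
    HasDerivAt (fun y => ∫ t in Iic y, f t) (f x) x := by
  have hsplit : ∀ y, ∫ t in Iic y, f t = (∫ t in Iic 0, f t) + ∫ t in 0..y, f t := fun y => by
    rw [← intervalIntegral.integral_Iic_sub_Iic hf.integrableOn hf.integrableOn]
    ring
  rw [funext hsplit]
  exact ((hcont.integral_hasStrictDerivAt 0 x).hasDerivAt).const_add _

end Measure

section StdNormal

theorem gaussianPDFReal_zero_one : gaussianPDFReal 0 1 = stdNormalPDF := by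
  funext u
  simp [gaussianPDFReal, stdNormalPDF]

theorem stdNormalCDF_eq_integral (x : ℝ) : stdNormalCDF x = ∫ t in Iic x, stdNormalPDF t := by
  rw [stdNormalCDF, cdf_eq_real, measureReal_def, gaussianReal_apply_eq_integral 0 one_ne_zero,
    ENNReal.toReal_ofReal (integral_nonneg (gaussianPDFReal_nonneg 0 1)), gaussianPDFReal_zero_one]

theorem hasDerivAt_stdNormalCDF (x : ℝ) : HasDerivAt stdNormalCDF (stdNormalPDF x) x := by
  rw [funext stdNormalCDF_eq_integral]
  refine hasDerivAt_integral_Iic ?_ ?_ x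
  · exact gaussianPDFReal_zero_one ▸ integrable_gaussianPDFReal 0 1
  · unfold stdNormalPDF
    fun_prop

theorem hasDerivAt_stdNormalCDF_const_div (a : ℝ) {σ : ℝ} (hσ : σ ≠ 0) :
    HasDerivAt (fun s => stdNormalCDF (a / s)) (-(a / σ ^ 2) * stdNormalPDF (a / σ)) σ := by
  have hdiv : HasDerivAt (fun s => a / s) (-(a / σ ^ 2)) σ := by
    simpa [div_eq_mul_inv] using (hasDerivAt_inv hσ).const_mul a
  rw [mul_comm]
  exact (hasDerivAt_stdNormalCDF (a / σ)).comp σ hdiv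

theorem stdNormalCDF_neg (x : ℝ) : stdNormalCDF (-x) = 1 - stdNormalCDF x := by
  have := nullSingletonClass_gaussianReal (μ := 0) one_ne_zero
  rw [stdNormalCDF, stdNormalCDF, cdf_eq_real, cdf_eq_real]
  conv_lhs => rw [← neg_zero, ← gaussianReal_map_neg]
  rw [map_measureReal_apply (by fun_prop) measurableSet_Iic,
    ← probReal_compl_eq_one_sub measurableSet_Iic, compl_Iic, measureReal_congr Ioi_ae_eq_Ici]
  congr 1
  ext t
  simp

theorem cdf_gaussianReal (μ : ℝ) {v : NNReal} (hv : v ≠ 0) (x : ℝ) :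
    cdf (gaussianReal μ v) x = stdNormalCDF ((x - μ) / √v) := by
  have hsqrt : 0 < √(v : ℝ) := Real.sqrt_pos.2 (by positivity)
  have hstd : (gaussianReal μ v).map (fun t => (t - μ) / √v) = gaussianReal 0 1 := by
    rw [show (fun t => (t - μ) / √v) = (· / √v) ∘ (· - μ) from rfl,
      ← Measure.map_map (by fun_prop) (by fun_prop), gaussianReal_map_sub_const,
      gaussianReal_map_div_const, sub_self, zero_div]
    congr 1
    ext
    simp [Real.sq_sqrt v.coe_nonneg, div_self (NNReal.coe_ne_zero.2 hv)]
  rw [stdNormalCDF, cdf_eq_real, cdf_eq_real, ← hstd,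
    map_measureReal_apply (by fun_prop) measurableSet_Iic]
  congr 1
  ext t
  simp [div_le_div_iff_of_pos_right hsqrt]

theorem gaussianReal_real_Icc_neg_self {v : NNReal} (hv : v ≠ 0) {a : ℝ} (ha : 0 ≤ a) :
    (gaussianReal 0 v).real (Icc (-a) a) = 2 * stdNormalCDF (a / √v) - 1 := by
  have := nullSingletonClass_gaussianReal (μ := 0) hv
  rw [← measureReal_congr Ioc_ae_eq_Icc, measureReal_Ioc_eq_cdf_sub_cdf _ (by linarith),
    cdf_gaussianReal 0 hv, cdf_gaussianReal 0 hv, sub_zero, sub_zero, neg_div, stdNormalCDF_neg]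
  ring

end StdNormal

section Boxcar

variable {ν : ℝ}

theorem shortPSF_boxcar_sub (hν : 0 < ν) (x θ : ℝ) :
    shortPSF boxcar ν (x - θ) = (Icc (x - ν) (x + ν)).indicator (fun _ => 1 / (2 * ν)) θ := by
  have hsupp : |(x - θ) / ν| ≤ 1 ↔ θ ∈ Icc (x - ν) (x + ν) := by
    rw [abs_div, abs_of_pos hν, div_le_one hν, abs_le, mem_Icc]
    constructor <;> rintro ⟨h₁, h₂⟩ <;> constructor <;> linarith
  simp only [shortPSF, boxcar, indicator_apply, hsupp]
  split_ifs <;> ring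

theorem Vnu_boxcar (hν : 0 < ν) (σ x : ℝ) :
    Vnu boxcar ν σ x = (1 / (2 * ν)) ^ 2 *
      ((gaussianReal 0 (σ ^ 2).toNNReal).real (Icc (x - ν) (x + ν))
        - (gaussianReal 0 (σ ^ 2).toNNReal).real (Icc (x - ν) (x + ν)) ^ 2) := by
  simp only [Vnu, shortPSF_boxcar_sub hν]
  exact integral_indicator_const_sq_sub_sq _ measurableSet_Icc _

theorem Vnu_boxcar_zero (hν : 0 < ν) {σ : ℝ} (hσ : 0 < σ) :
    Vnu boxcar ν σ 0 = (1 / (2 * ν)) ^ 2 *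
      ((2 * stdNormalCDF (ν / σ) - 1) - (2 * stdNormalCDF (ν / σ) - 1) ^ 2) := by
  have hv : (σ ^ 2).toNNReal ≠ 0 := by simpa using hσ.ne'
  have hsqrt : √((σ ^ 2).toNNReal : ℝ) = σ := by
    rw [Real.coe_toNNReal _ (sq_nonneg σ), Real.sqrt_sq hσ.le]
  rw [Vnu_boxcar hν, zero_sub, zero_add, gaussianReal_real_Icc_neg_self hv hν.le, hsqrt]

end Boxcar

theorem boxcar_variance_hasDerivAt (ν : ℝ) (hν : 0 < ν) (σ : ℝ) (hσ : 0 < σ) :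
    HasDerivAt (fun s : ℝ => Vnu boxcar ν s 0)
      ((1 / (4 * ν ^ 2)) * (-(2 * ν / σ ^ 2) * stdNormalPDF (ν / σ))
        * (1 - 2 * (2 * stdNormalCDF (ν / σ) - 1))) σ := by
  have hg : HasDerivAt (fun s => 2 * stdNormalCDF (ν / s) - 1)
      (-(2 * ν / σ ^ 2) * stdNormalPDF (ν / σ)) σ :=
    (((hasDerivAt_stdNormalCDF_const_div ν hσ.ne').const_mul 2).sub_const 1).congr_deriv (by ring)
  have hV := (hg.sub (hg.pow 2)).const_mul ((1 / (2 * ν)) ^ 2)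
  refine (hV.congr_deriv ?_).congr_of_eventuallyEq ?_
  · norm_num
    ring
  · filter_upwards [Ioi_mem_nhds hσ] with s hs
    exact Vnu_boxcar_zero hν hs
end
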